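/- Let N be a positive integer, let F : ℝ^N → ℝ be measurable with x ↦ exp(−F(x)) Lebesgue integrable, let μ ∈ ℝ^N, ζ ∈ ℝ, let H be a symmetric positive definite N×N matrix with H = L Lᵀ for an invertible matrix L, let F̃(x) = ζ + (1/2)(x − μ)ᵀ H (x − μ), and let γ denote the standard Gaussian probability measure on ℝ^N (the product of N copies of the standard normal distribution). Then ∫_{ℝ^N} exp(−F(x)) dx = (2π)^{N/2} |det L|⁻¹ ∫_{ℝ^N} exp( −ζ + F̃(μ + (Lᵀ)⁻¹ξ) − F(μ + (Lᵀ)⁻¹ξ) ) dγ(ξ). -/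
import Mathlib


open Matrix MeasureTheory ProbabilityTheory
open scoped ENNReal NNReal

set_option maxHeartbeats 1000000

private lemma lintegral_pi_fin_prod {n : ℕ} (f : Fin n → ℝ → ℝ≥0∞) (hf : ∀ i, Measurable (f i)) :
    ∫⁻ x : Fin n → ℝ, ∏ i, f i (x i) ∂(Measure.pi fun _ => (volume : Measure ℝ))
      = ∏ i, ∫⁻ x, f i x := by
  induction n with
  | zero => simp
  | succ n ih =>
    have h := (measurePreserving_piFinSuccAbove (fun _ : Fin (n + 1) => (volume : Measure ℝ)) 0).symm
    rw [← h.lintegral_comp_emb (MeasurableEquiv.measurableEmbedding _)]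
    have : ∀ p : ℝ × (Fin n → ℝ),
        (∏ i, f i ((MeasurableEquiv.piFinSuccAbove (fun _ => ℝ) 0).symm p i))
          = f 0 p.1 * ∏ i : Fin n, f i.succ (p.2 i) := by
      intro p
      rw [Fin.prod_univ_succ]
      simp [MeasurableEquiv.piFinSuccAbove_symm_apply, Fin.insertNthEquiv,
        Fin.insertNth_zero, Fin.zero_succAbove]
    simp_rw [this]
    rw [lintegral_prod_mul (f := f 0) (g := fun y : Fin n → ℝ => ∏ i : Fin n, f i.succ (y i))
      (hf 0).aemeasurable
      (Finset.measurable_prod Finset.univ fun i _ =>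
        (hf i.succ).comp (measurable_pi_apply i)).aemeasurable]
    rw [ih (fun i => f i.succ) (fun i => hf i.succ)]
    rw [Fin.prod_univ_succ]

private lemma pi_gaussian_eq_withDensity (n : ℕ) :
    (Measure.pi fun _ : Fin n => gaussianReal 0 1)
      = (volume : Measure (Fin n → ℝ)).withDensity
          (fun x => ∏ i, gaussianPDF 0 1 (x i)) := by
  apply Measure.pi_eq
  intro s hs
  rw [withDensity_apply _ (MeasurableSet.univ_pi hs)]
  have hind : ∀ x : Fin n → ℝ,
      (Set.univ.pi s).indicator (fun x => ∏ i, gaussianPDF 0 1 (x i)) x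
        = ∏ i, (s i).indicator (gaussianPDF 0 1) (x i) := by
    intro x
    by_cases hx : x ∈ Set.pi Set.univ s
    · rw [Set.indicator_of_mem hx]
      exact Finset.prod_congr rfl fun i _ =>
        (Set.indicator_of_mem (hx i (Set.mem_univ i)) _).symm
    · rw [Set.indicator_of_notMem hx]
      rw [Set.mem_univ_pi] at hx
      push_neg at hx
      obtain ⟨i, hi⟩ := hx
      exact (Finset.prod_eq_zero (Finset.mem_univ i)
        (by rw [Set.indicator_of_notMem hi])).symm
  rw [← lintegral_indicator (MeasurableSet.univ_pi hs)]
  simp_rw [hind]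
  rw [show (volume : Measure (Fin n → ℝ)) = Measure.pi fun _ => (volume : Measure ℝ) from rfl]
  rw [lintegral_pi_fin_prod _ (fun i => (measurable_gaussianPDF 0 1).indicator (hs i))]
  exact Finset.prod_congr rfl fun i _ => by
    rw [lintegral_indicator (hs i), gaussianReal_apply 0 one_ne_zero]

/-- The implicit-sampling identity with respect to the standard Gaussian
measure `γ = N(0, I_N)` on `ℝ^N` (the product of `N` copies of the standard normal
distribution): with `H = L Lᵀ` symmetric positive definite and
`F̃(x) = ζ + (1/2)(x − μ)ᵀ H (x − μ)`, one has
`∫ exp(−F(x)) dx = (2π)^{N/2} |det L|⁻¹ ∫ exp(−ζ + F̃(μ + (Lᵀ)⁻¹ξ) − F(μ + (Lᵀ)⁻¹ξ)) dγ(ξ)`. -/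
theorem implicit_sampling_gaussian_expectation
    (N : ℕ) (hN : 0 < N) (F : (Fin N → ℝ) → ℝ) (hFmeas : Measurable F)
    (hFint : Integrable (fun x => Real.exp (-F x)) volume)
    (μ : Fin N → ℝ) (ζ : ℝ) (H L : Matrix (Fin N) (Fin N) ℝ)
    (hH : H.PosDef) (hHL : H = L * Lᵀ) (hL : IsUnit L.det) :
    let Ftil : (Fin N → ℝ) → ℝ := fun x => ζ + (1 / 2) * ((x - μ) ⬝ᵥ (H *ᵥ (x - μ)))
    let γ : Measure (Fin N → ℝ) :=
      Measure.pi fun _ : Fin N => ProbabilityTheory.gaussianReal 0 1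
    ∫ x : Fin N → ℝ, Real.exp (-F x)
      = (2 * Real.pi) ^ ((N : ℝ) / 2) * |L.det|⁻¹ *
        ∫ ξ : Fin N → ℝ,
          Real.exp (-ζ + Ftil (μ + (Lᵀ)⁻¹ *ᵥ ξ) - F (μ + (Lᵀ)⁻¹ *ᵥ ξ)) ∂γ := by
  intro Ftil γ
  set A : Matrix (Fin N) (Fin N) ℝ := (Lᵀ)⁻¹ with hA
  have hdetL : L.det ≠ 0 := hL.ne_zero
  have hLT : IsUnit (Lᵀ).det := by rwa [det_transpose]
  -- Step A: the quadratic form simplifies along the sampling map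
  have hquad : ∀ ξ : Fin N → ℝ, (A *ᵥ ξ) ⬝ᵥ (H *ᵥ (A *ᵥ ξ)) = ξ ⬝ᵥ ξ := by
    intro ξ
    have hAt : Aᵀ = L⁻¹ := by
      rw [hA, transpose_nonsing_inv, transpose_transpose]
    have hmat : Aᵀ * (H * A) = 1 := by
      rw [hAt, hHL, hA, mul_assoc L, Matrix.mul_nonsing_inv _ hLT, mul_one,
        Matrix.nonsing_inv_mul _ hL]
    calc (A *ᵥ ξ) ⬝ᵥ (H *ᵥ (A *ᵥ ξ))
        = (ξ ᵥ* Aᵀ) ⬝ᵥ (H *ᵥ (A *ᵥ ξ)) := by rw [vecMul_transpose]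
      _ = ξ ⬝ᵥ (Aᵀ *ᵥ (H *ᵥ (A *ᵥ ξ))) := (dotProduct_mulVec _ _ _).symm
      _ = ξ ⬝ᵥ ((Aᵀ * (H * A)) *ᵥ ξ) := by rw [mulVec_mulVec, mulVec_mulVec, mul_assoc]
      _ = ξ ⬝ᵥ ξ := by rw [hmat, one_mulVec]
  have hFtil : ∀ ξ : Fin N → ℝ,
      -ζ + Ftil (μ + A *ᵥ ξ) - F (μ + A *ᵥ ξ)
        = (1 / 2) * (ξ ⬝ᵥ ξ) - F (μ + A *ᵥ ξ) := by
    intro ξ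
    simp only [Ftil, add_sub_cancel_left, hquad]
    ring
  -- Step B: rewrite the Gaussian integral as a Lebesgue integral with density
  have hγ : γ = (volume : Measure (Fin N → ℝ)).withDensity
      (fun x => ∏ i, gaussianPDF 0 1 (x i)) := pi_gaussian_eq_withDensity N
  have hdens : (fun x : Fin N → ℝ => ∏ i, gaussianPDF 0 1 (x i))
      = fun x => ((∏ i, Real.toNNReal (gaussianPDFReal 0 1 (x i)) : ℝ≥0) : ℝ≥0∞) := by
    funext x
    rw [ENNReal.coe_finset_prod]
    exact Finset.prod_congr rfl fun i _ => rfl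
  have hmeasNN : Measurable fun x : Fin N → ℝ =>
      ∏ i, Real.toNNReal (gaussianPDFReal 0 1 (x i)) :=
    Finset.measurable_prod _ fun i _ =>
      ((measurable_gaussianPDFReal 0 1).comp (measurable_pi_apply i)).real_toNNReal
  have hint : ∫ ξ : Fin N → ℝ, Real.exp (-ζ + Ftil (μ + A *ᵥ ξ) - F (μ + A *ᵥ ξ)) ∂γ
      = ∫ ξ : Fin N → ℝ, (∏ i, Real.toNNReal (gaussianPDFReal 0 1 (ξ i)) : ℝ≥0)
          • Real.exp (-ζ + Ftil (μ + A *ᵥ ξ) - F (μ + A *ᵥ ξ)) := by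
    rw [hγ, hdens, integral_withDensity_eq_integral_smul hmeasNN]
  -- Step C: pointwise simplification of the integrand
  have hpdfprod : ∀ ξ : Fin N → ℝ,
      ((∏ i, Real.toNNReal (gaussianPDFReal 0 1 (ξ i)) : ℝ≥0) : ℝ)
        = (Real.sqrt (2 * Real.pi))⁻¹ ^ N * Real.exp (-((1 : ℝ) / 2) * (ξ ⬝ᵥ ξ)) := by
    intro ξ
    push_cast
    rw [Finset.prod_congr rfl fun i _ =>
      Real.coe_toNNReal _ (gaussianPDFReal_nonneg 0 1 (ξ i))]
    have : ∀ i, gaussianPDFReal 0 1 (ξ i)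
        = (Real.sqrt (2 * Real.pi))⁻¹ * Real.exp (-(ξ i) ^ 2 / 2) := by
      intro i
      simp [gaussianPDFReal]
    rw [Finset.prod_congr rfl fun i _ => this i, Finset.prod_mul_distrib,
      Finset.prod_const, ← Real.exp_sum, Finset.card_univ, Fintype.card_fin]
    rw [dotProduct]
    congr 1
    congr 1
    rw [Finset.mul_sum]
    exact Finset.sum_congr rfl fun i _ => by ring
  -- combine into a clean integrand
  set c : ℝ := (Real.sqrt (2 * Real.pi))⁻¹ with hc
  have hptwise : ∀ ξ : Fin N → ℝ,
      (∏ i, Real.toNNReal (gaussianPDFReal 0 1 (ξ i)) : ℝ≥0)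
          • Real.exp (-ζ + Ftil (μ + A *ᵥ ξ) - F (μ + A *ᵥ ξ))
        = c ^ N * Real.exp (-F (μ + A *ᵥ ξ)) := by
    intro ξ
    rw [NNReal.smul_def, smul_eq_mul, hpdfprod ξ, hFtil ξ, mul_assoc, ← Real.exp_add]
    congr 2
    ring
  -- change of variables
  have hdetA : A.det = (L.det)⁻¹ := by
    rw [hA, Matrix.det_nonsing_inv, det_transpose, Ring.inverse_eq_inv']
  have hdetA0 : A.det ≠ 0 := by
    rw [hdetA]; exact inv_ne_zero hdetL
  have hmap : Measure.map (Matrix.toLin' A) volume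
      = ENNReal.ofReal |A.det⁻¹| • (volume : Measure (Fin N → ℝ)) :=
    Real.map_matrix_volume_pi_eq_smul_volume_pi hdetA0
  have hTmeas : Measurable (Matrix.toLin' A) :=
    (LinearMap.continuous_on_pi _).measurable
  have hgmeas : Measurable fun x : Fin N → ℝ => Real.exp (-F (μ + x)) :=
    ((hFmeas.comp (measurable_const_add μ)).neg).exp
  have hchange : ∫ ξ : Fin N → ℝ, Real.exp (-F (μ + A *ᵥ ξ))
      = |L.det| * ∫ x : Fin N → ℝ, Real.exp (-F x) := by
    have h1 : ∫ ξ : Fin N → ℝ, Real.exp (-F (μ + A *ᵥ ξ))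
        = ∫ y, Real.exp (-F (μ + y)) ∂(Measure.map (Matrix.toLin' A) volume) := by
      rw [integral_map hTmeas.aemeasurable hgmeas.aestronglyMeasurable]
      simp_rw [Matrix.toLin'_apply]
    rw [h1, hmap, integral_smul_measure,
      ENNReal.toReal_ofReal (abs_nonneg _), smul_eq_mul]
    have h2 : ∫ y : Fin N → ℝ, Real.exp (-F (μ + y)) = ∫ x : Fin N → ℝ, Real.exp (-F x) :=
      integral_add_left_eq_self (fun x => Real.exp (-F x)) μ
    rw [h2, hdetA, inv_inv]
  -- put everything together
  rw [hint]
  simp_rw [hptwise]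
  rw [integral_const_mul, hchange]
  have hpow : c ^ N = ((2 * Real.pi) ^ ((N : ℝ) / 2))⁻¹ := by
    rw [hc, inv_pow]
    congr 1
    rw [Real.sqrt_eq_rpow, ← Real.rpow_natCast ((2 * Real.pi) ^ ((1:ℝ)/2)) N,
      ← Real.rpow_mul (by positivity)]
    congr 1
    ring
  rw [hpow]
  have hrpow0 : (2 * Real.pi) ^ ((N : ℝ) / 2) ≠ 0 :=
    ne_of_gt (Real.rpow_pos_of_pos (by positivity) _)
  have habs0 : |L.det| ≠ 0 := abs_ne_zero.mpr hdetL
  field_simp
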